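/- arXiv:1909.03245 — 6 statements merged into one kernel-verified Lean document; each statement's English description precedes it below -/
import Mathlib

section
/- Let Δ̃ be a real N×m matrix, λ > 0, A = Δ̃ᵀΔ̃ + λI, and 𝟏 ∈ ℝᵐ the all-ones vector. Define α̃ = A⁻¹𝟏 / (𝟏ᵀA⁻¹𝟏). Then ‖α̃‖₂² ≤ (λ + ‖Δ̃‖²) / (m·λ), where ‖Δ̃‖ is the operator norm of Δ̃. -/
open Matrix
open scoped Matrix.Norms.L2Operator

/-!
Write `v = A⁻¹𝟏` and `s = 𝟏ᵀv`, so that `‖α̃‖² = ‖v‖²/s²`. From `λI ≤ A` we get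
`λ‖v‖² ≤ vᵀAv = s`. From `A ≤ (λ + ‖Δ̃‖²)I` we get `m ≤ (λ + ‖Δ̃‖²)s`, by evaluating
`𝟏ᵀA⁻¹𝟏 = max_x (2xᵀ𝟏 - xᵀAx)` at `x = 𝟏/(λ + ‖Δ̃‖²)`. Together,
`‖α̃‖² ≤ 1/(λs) ≤ (λ + ‖Δ̃‖²)/(mλ)`.
-/

theorem EuclideanSpace.norm_toLp_sq_eq_dotProduct {n : Type*} [Fintype n] (y : n → ℝ) :
    ‖WithLp.toLp 2 y‖ ^ 2 = y ⬝ᵥ y := by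
  rw [EuclideanSpace.real_norm_sq_eq]
  simp [dotProduct, sq]

namespace Matrix

variable {k n : Type*} [Fintype k] [Fintype n] [DecidableEq n]

theorem dotProduct_mulVec_transpose_mul_add_smul_one {R : Type*} [CommRing R]
    (Δ : Matrix k n R) (lam : R) (x : n → R) :
    x ⬝ᵥ (Δᵀ * Δ + lam • 1) *ᵥ x = Δ *ᵥ x ⬝ᵥ Δ *ᵥ x + lam * (x ⬝ᵥ x) := by
  rw [add_mulVec, dotProduct_add, smul_mulVec, one_mulVec, dotProduct_smul, smul_eq_mul,
    ← mulVec_mulVec, dotProduct_mulVec, vecMul_transpose]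

theorem mulVec_dotProduct_mulVec_le (Δ : Matrix k n ℝ) (x : n → ℝ) :
    Δ *ᵥ x ⬝ᵥ Δ *ᵥ x ≤ ‖Δ‖ ^ 2 * (x ⬝ᵥ x) := by
  rw [← EuclideanSpace.norm_toLp_sq_eq_dotProduct, ← EuclideanSpace.norm_toLp_sq_eq_dotProduct,
    ← mul_pow]
  exact pow_le_pow_left₀ (norm_nonneg _) (l2_opNorm_mulVec Δ (WithLp.toLp 2 x)) 2

theorem mulVec_inv_mulVec {R : Type*} [CommRing R] {A : Matrix n n R} (hdet : IsUnit A.det)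
    (b : n → R) : A *ᵥ (A⁻¹ *ᵥ b) = b := by
  rw [mulVec_mulVec, mul_nonsing_inv A hdet, one_mulVec]

theorem mul_dotProduct_inv_mulVec_self_le {A : Matrix n n ℝ} (hdet : IsUnit A.det) {lam : ℝ}
    (hle : ∀ x, lam * (x ⬝ᵥ x) ≤ x ⬝ᵥ A *ᵥ x) (b : n → ℝ) :
    lam * (A⁻¹ *ᵥ b ⬝ᵥ A⁻¹ *ᵥ b) ≤ b ⬝ᵥ A⁻¹ *ᵥ b := by
  simpa [mulVec_inv_mulVec hdet, dotProduct_comm] using hle (A⁻¹ *ᵥ b)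

theorem PosSemidef.two_mul_dotProduct_sub_le {A : Matrix n n ℝ} (hA : A.PosSemidef)
    (hdet : IsUnit A.det) (x b : n → ℝ) :
    2 * (x ⬝ᵥ b) - x ⬝ᵥ A *ᵥ x ≤ b ⬝ᵥ A⁻¹ *ᵥ b := by
  have hsymm : A⁻¹ *ᵥ b ⬝ᵥ A *ᵥ x = x ⬝ᵥ b := by
    rw [dotProduct_mulVec, ← mulVec_transpose, ← conjTranspose_eq_transpose_of_trivial, hA.1,
      dotProduct_comm, mulVec_inv_mulVec hdet]
  have h0 := hA.dotProduct_mulVec_nonneg (x - A⁻¹ *ᵥ b)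
  rw [star_trivial, mulVec_sub, dotProduct_sub, sub_dotProduct, sub_dotProduct, hsymm,
    mulVec_inv_mulVec hdet, dotProduct_comm (A⁻¹ *ᵥ b) b] at h0
  linarith

theorem PosSemidef.dotProduct_self_le_mul_dotProduct_inv_mulVec {A : Matrix n n ℝ}
    (hA : A.PosSemidef) (hdet : IsUnit A.det) {c : ℝ} (hc : 0 < c)
    (hle : ∀ x, x ⬝ᵥ A *ᵥ x ≤ c * (x ⬝ᵥ x)) (b : n → ℝ) :
    b ⬝ᵥ b ≤ c * (b ⬝ᵥ A⁻¹ *ᵥ b) := by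
  have h := hA.two_mul_dotProduct_sub_le hdet (c⁻¹ • b) b
  have hq := hle (c⁻¹ • b)
  simp only [dotProduct_smul, smul_dotProduct, smul_eq_mul] at h hq
  rw [← mul_assoc c, mul_inv_cancel₀ hc.ne', one_mul] at hq
  rw [← inv_mul_le_iff₀ hc]
  linarith

end Matrix

/-- First bound of Proposition 1: the regularized Anderson acceleration coefficient vector
`α̃ = (Δ̃ᵀΔ̃ + λI)⁻¹𝟏 / (𝟏ᵀ(Δ̃ᵀΔ̃ + λI)⁻¹𝟏)` satisfies `‖α̃‖² ≤ (λ + ‖Δ̃‖²)/(mλ)`. -/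
theorem raa_coefficient_norm_bound
    {N m : ℕ} (hm : 0 < m) (Δ : Matrix (Fin N) (Fin m) ℝ) (lam : ℝ) (hlam : 0 < lam)
    (A : Matrix (Fin m) (Fin m) ℝ)
    (hA : A = Δᵀ * Δ + lam • (1 : Matrix (Fin m) (Fin m) ℝ))
    (α : Fin m → ℝ)
    (hα : α = (1 / ((1 : Fin m → ℝ) ⬝ᵥ A⁻¹.mulVec 1)) • A⁻¹.mulVec 1) :
    ∑ i, α i ^ 2 ≤ (lam + ‖Δ‖ ^ 2) / (m * lam) := by
  have hPD : A.PosDef := by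
    rw [hA, ← conjTranspose_eq_transpose_of_trivial]
    exact PosDef.posSemidef_add (posSemidef_conjTranspose_mul_self Δ) (PosDef.one.smul hlam)
  have hdet : IsUnit A.det := hPD.det_pos.ne'.isUnit
  have hquad (x : Fin m → ℝ) : x ⬝ᵥ A *ᵥ x = Δ *ᵥ x ⬝ᵥ Δ *ᵥ x + lam * (x ⬝ᵥ x) :=
    hA ▸ dotProduct_mulVec_transpose_mul_add_smul_one Δ lam x
  set c := lam + ‖Δ‖ ^ 2
  have hc : 0 < c := by positivity
  set v := A⁻¹ *ᵥ 1
  set s := (1 : Fin m → ℝ) ⬝ᵥ v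
  have hm_le : (m : ℝ) ≤ c * s := by
    simpa [one_dotProduct_one] using
      hPD.posSemidef.dotProduct_self_le_mul_dotProduct_inv_mulVec hdet hc
        (fun x ↦ by nlinarith [hquad x, mulVec_dotProduct_mulVec_le Δ x]) 1
  have hvv : lam * (v ⬝ᵥ v) ≤ s :=
    mul_dotProduct_inv_mulVec_self_le hdet
      (fun x ↦ by simpa [hquad x] using dotProduct_star_self_nonneg (Δ *ᵥ x)) 1
  have hs : 0 < s := by
    have : (0 : ℝ) < m := by exact_mod_cast hm
    nlinarith
  calc ∑ i, α i ^ 2 = v ⬝ᵥ v / s ^ 2 := by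
        simp only [hα, Pi.smul_apply, smul_eq_mul, mul_pow, ← Finset.mul_sum]
        simp [dotProduct, sq, div_eq_inv_mul]
    _ ≤ s / lam / s ^ 2 := by gcongr; rwa [le_div_iff₀ hlam, mul_comm]
    _ = 1 / (lam * s) := by field_simp
    _ ≤ c / (m * lam) := by
      rw [div_le_div_iff₀ (by positivity) (by positivity)]
      nlinarith
end

section
/- Let A be a symmetric positive definite m×m real matrix and v a unit vector in ℝᵐ. Then (vᵀA⁻²v) / (vᵀA⁻¹v)² ≤ ‖A⁻¹‖·‖A‖, where ‖·‖ denotes the operator norm. -/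
/-!
For a positive semidefinite `M`, functional calculus gives `M * M ≤ ‖M‖ • M`, since
`t² ≤ ‖M‖ t` on the spectrum of `M`, which lies in `[0, ‖M‖]`. With `d = vᵀA⁻¹v` and `u = A⁻¹v`,
this bound for `A⁻¹` at `v` gives `vᵀA⁻²v ≤ ‖A⁻¹‖ d`, and for `A` at `u` it gives
`1 = vᵀv = uᵀA²u ≤ ‖A‖ uᵀAu = ‖A‖ d`. Hence `vᵀA⁻²v ≤ ‖A⁻¹‖ d · ‖A‖ d`.
-/

open Matrix
open scoped Matrix.Norms.L2Operator MatrixOrder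

section
variable {A : Type*} [NormedRing A] [StarRing A] [NormedAlgebra ℝ A] [PartialOrder A]
  [StarOrderedRing A] [IsometricContinuousFunctionalCalculus ℝ A IsSelfAdjoint]
  [NonnegSpectrumClass ℝ A]

theorem mul_self_le_norm_smul_of_nonneg {a : A} (ha : 0 ≤ a) : a * a ≤ ‖a‖ • a := by
  calc a * a = cfc (fun x : ℝ => x * x) a := by rw [cfc_mul _ _ a, cfc_id' ℝ a]
    _ ≤ cfc (fun x : ℝ => ‖a‖ * x) a := cfc_mono fun x hx => by
        have hx₀ : 0 ≤ x := spectrum_nonneg_of_nonneg ha hx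
        have hxa : x ≤ ‖a‖ :=
          (le_abs_self x).trans (IsometricContinuousFunctionalCalculus.norm_spectrum_le a hx)
        exact mul_le_mul_of_nonneg_right hxa hx₀
    _ = ‖a‖ • a := cfc_const_mul_id ‖a‖ a

end

theorem Matrix.IsSymm.dotProduct_mul_self_mulVec {n R : Type*} [Fintype n] [CommSemiring R]
    {A : Matrix n n R} (hA : A.IsSymm) (x : n → R) :
    x ⬝ᵥ (A * A) *ᵥ x = A *ᵥ x ⬝ᵥ A *ᵥ x := by
  rw [← mulVec_mulVec, dotProduct_mulVec, ← mulVec_transpose, hA.eq]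

theorem Matrix.PosSemidef.dotProduct_mul_self_mulVec_le {n : Type*} [Fintype n] [DecidableEq n]
    {A : Matrix n n ℝ} (hA : A.PosSemidef) (x : n → ℝ) :
    x ⬝ᵥ (A * A) *ᵥ x ≤ ‖A‖ * (x ⬝ᵥ A *ᵥ x) := by
  have h := (le_iff.mp (mul_self_le_norm_smul_of_nonneg hA.nonneg)).dotProduct_mulVec_nonneg x
  rw [sub_mulVec, smul_mulVec, dotProduct_sub, dotProduct_smul, star_trivial, smul_eq_mul] at h
  linarith

/-- For a symmetric positive definite matrix `A` and a unit vector `v`,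
`(vᵀA⁻²v)/(vᵀA⁻¹v)² ≤ ‖A⁻¹‖·‖A‖` (operator norms). -/
theorem posDef_quadratic_quotient_le_condition_number
    {m : ℕ} (A : Matrix (Fin m) (Fin m) ℝ) (hA : A.PosDef)
    (v : Fin m → ℝ) (hv : v ⬝ᵥ v = 1) :
    (v ⬝ᵥ (A⁻¹ * A⁻¹).mulVec v) / (v ⬝ᵥ A⁻¹.mulVec v) ^ 2 ≤ ‖A⁻¹‖ * ‖A‖ := by
  set u := A⁻¹ *ᵥ v
  set d := v ⬝ᵥ u
  have hd : 0 < d := by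
    have hv₀ : v ≠ 0 := by rintro rfl; simp at hv
    simpa using hA.inv.dotProduct_mulVec_pos hv₀
  have hAu : A *ᵥ u = v := by
    rw [mulVec_mulVec, mul_nonsing_inv A (A.isUnit_iff_isUnit_det.mp hA.isUnit), one_mulVec]
  have hnum : v ⬝ᵥ (A⁻¹ * A⁻¹) *ᵥ v ≤ ‖A⁻¹‖ * d :=
    hA.inv.posSemidef.dotProduct_mul_self_mulVec_le v
  have hden : 1 ≤ ‖A‖ * d :=
    calc 1 = u ⬝ᵥ (A * A) *ᵥ u := by
          rw [(isHermitian_iff_isSymm.mp hA.isHermitian).dotProduct_mul_self_mulVec, hAu, hv]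
      _ ≤ ‖A‖ * (u ⬝ᵥ A *ᵥ u) := hA.posSemidef.dotProduct_mul_self_mulVec_le u
      _ = ‖A‖ * d := by rw [hAu, dotProduct_comm]
  rw [div_le_iff₀ (by positivity)]
  calc v ⬝ᵥ (A⁻¹ * A⁻¹) *ᵥ v ≤ ‖A⁻¹‖ * d * 1 := by rwa [mul_one]
    _ ≤ ‖A⁻¹‖ * d * (‖A‖ * d) := by gcongr
    _ = ‖A⁻¹‖ * ‖A‖ * d ^ 2 := by ring
end

section
/- Let A be a symmetric positive definite m×m real matrix with smallest eigenvalue at least λ > 0 and largest eigenvalue at most λ + c for some c ≥ 0, and let 𝟏 ∈ ℝᵐ be the all-ones vector. Then the vector α̃ = A⁻¹𝟏 / (𝟏ᵀA⁻¹𝟏) satisfies ‖α̃‖₂² ≤ (λ + c)/(m·λ). -/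
/-!
Put `u = A⁻¹𝟏` and `s = 𝟏ᵀu = uᵀAu`, so that `‖α̃‖² = ‖u‖²/s²`. The lower spectral bound gives
`λ‖u‖² ≤ s`, and Cauchy–Schwarz for `⟪x, y⟫ = xᵀAy` applied to `𝟏` and `u` gives
`m² ≤ (𝟏ᵀA𝟏) s ≤ (λ + c) m s`. Hence `‖α̃‖² ≤ 1/(λs) ≤ (λ + c)/(mλ)`.
-/

open Matrix

namespace Matrix

variable {n : Type*} [Fintype n]

theorem mulVec_nonsing_inv_mulVec {R : Type*} [CommRing R] [DecidableEq n] {A : Matrix n n R}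
    (h : IsUnit A.det) (x : n → R) : A *ᵥ (A⁻¹ *ᵥ x) = x := by
  rw [mulVec_mulVec, mul_nonsing_inv A h, one_mulVec]

theorem IsSymm.dotProduct_mulVec_comm {R : Type*} [CommSemiring R] {M : Matrix n n R}
    (hM : M.IsSymm) (x y : n → R) : y ⬝ᵥ M *ᵥ x = x ⬝ᵥ M *ᵥ y := by
  rw [dotProduct_mulVec, ← mulVec_transpose, hM.eq, dotProduct_comm]

theorem PosSemidef.sq_dotProduct_mulVec_le {M : Matrix n n ℝ} (hM : M.PosSemidef)
    (x y : n → ℝ) : (x ⬝ᵥ M *ᵥ y) ^ 2 ≤ (x ⬝ᵥ M *ᵥ x) * (y ⬝ᵥ M *ᵥ y) := by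
  have hsym := (isHermitian_iff_isSymm.mp hM.isHermitian).dotProduct_mulVec_comm x y
  have hdisc := discrim_le_zero (a := y ⬝ᵥ M *ᵥ y) (b := 2 * (x ⬝ᵥ M *ᵥ y))
    (c := x ⬝ᵥ M *ᵥ x) fun t => by
      have hnonneg := hM.dotProduct_mulVec_nonneg (x + t • y)
      simp only [star_trivial, mulVec_add, mulVec_smul, dotProduct_add, add_dotProduct,
        dotProduct_smul, smul_dotProduct, smul_eq_mul, hsym] at hnonneg
      linear_combination hnonneg
  rw [discrim] at hdisc
  linarith

theorem PosDef.sq_dotProduct_self_le_mul_inv [DecidableEq n] {A : Matrix n n ℝ}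
    (hA : A.PosDef) (x : n → ℝ) : (x ⬝ᵥ x) ^ 2 ≤ (x ⬝ᵥ A *ᵥ x) * (x ⬝ᵥ A⁻¹ *ᵥ x) := by
  have hcs := hA.posSemidef.sq_dotProduct_mulVec_le x (A⁻¹ *ᵥ x)
  rwa [mulVec_nonsing_inv_mulVec ((isUnit_iff_isUnit_det A).mp hA.isUnit),
    dotProduct_comm (A⁻¹ *ᵥ x) x] at hcs

end Matrix

theorem raa_coefficient_norm_bound_abstract_general
    {m : ℕ} (hm : 0 < m) (A : Matrix (Fin m) (Fin m) ℝ) (hA : A.PosDef)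
    (lam c : ℝ) (hlam : 0 < lam)
    (hlow : ∀ v : Fin m → ℝ, lam * (v ⬝ᵥ v) ≤ v ⬝ᵥ A.mulVec v)
    (hhigh : ∀ v : Fin m → ℝ, v ⬝ᵥ A.mulVec v ≤ (lam + c) * (v ⬝ᵥ v))
    (α : Fin m → ℝ)
    (hα : α = (1 / ((1 : Fin m → ℝ) ⬝ᵥ A⁻¹.mulVec 1)) • A⁻¹.mulVec 1) :
    ∑ i, α i ^ 2 ≤ (lam + c) / (m * lam) := by
  set u := A⁻¹ *ᵥ 1
  set s := (1 : Fin m → ℝ) ⬝ᵥ u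
  have hAu : A *ᵥ u = 1 := mulVec_nonsing_inv_mulVec ((isUnit_iff_isUnit_det A).mp hA.isUnit) 1
  have hsu : u ⬝ᵥ A *ᵥ u = s := by rw [hAu, dotProduct_comm]
  have hu : u ≠ 0 := fun h => by simpa [h] using congrFun hAu ⟨0, hm⟩
  have hs : 0 < s := by simpa [hsu] using hA.dotProduct_mulVec_pos hu
  have hm' : (0 : ℝ) < m := Nat.cast_pos.mpr hm
  have hms : (m : ℝ) ≤ (lam + c) * s := by
    have hcs := hA.sq_dotProduct_self_le_mul_inv 1
    have hA1 := hhigh 1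
    have hone : (1 : Fin m → ℝ) ⬝ᵥ 1 = m := by simp
    rw [hone] at hcs hA1
    nlinarith
  have hα_sq : ∑ i, α i ^ 2 = (u ⬝ᵥ u) / s ^ 2 := by
    simp only [hα, Pi.smul_apply, smul_eq_mul, mul_pow, ← Finset.mul_sum, dotProduct, ← sq]
    ring
  calc ∑ i, α i ^ 2 = (u ⬝ᵥ u) / s ^ 2 := hα_sq
    _ ≤ (s / lam) / s ^ 2 := by
      gcongr
      rw [le_div_iff₀ hlam, mul_comm, ← hsu]
      exact hlow u
    _ = 1 / (lam * s) := by field_simp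
    _ ≤ (lam + c) / (m * lam) := by
      rw [div_le_div_iff₀ (by positivity) (by positivity)]
      nlinarith

/-- Abstract form of the first bound of Proposition 1: if the symmetric positive definite
matrix `A` has spectrum contained in `[λ, λ + c]`, then
`α̃ = A⁻¹𝟏/(𝟏ᵀA⁻¹𝟏)` satisfies `‖α̃‖² ≤ (λ + c)/(mλ)`. -/
theorem raa_coefficient_norm_bound_abstract
    {m : ℕ} (hm : 0 < m) (A : Matrix (Fin m) (Fin m) ℝ) (hA : A.PosDef)
    (lam c : ℝ) (hlam : 0 < lam) (hc : 0 ≤ c)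
    (hlow : ∀ v : Fin m → ℝ, lam * (v ⬝ᵥ v) ≤ v ⬝ᵥ A.mulVec v)
    (hhigh : ∀ v : Fin m → ℝ, v ⬝ᵥ A.mulVec v ≤ (lam + c) * (v ⬝ᵥ v))
    (α : Fin m → ℝ)
    (hα : α = (1 / ((1 : Fin m → ℝ) ⬝ᵥ A⁻¹.mulVec 1)) • A⁻¹.mulVec 1) :
    ∑ i, α i ^ 2 ≤ (lam + c) / (m * lam) :=
  raa_coefficient_norm_bound_abstract_general hm A hA lam c hlam hlow hhigh α hα
end

section
/- Let Δ and Δ̃ be real N×m matrices with ΔᵀΔ invertible, let λ > 0, and set A = Δ̃ᵀΔ̃ + λI, B = ΔᵀΔ. Define α = B⁻¹𝟏/(𝟏ᵀB⁻¹𝟏) and α̃ = A⁻¹𝟏/(𝟏ᵀA⁻¹𝟏). Then ‖α̃ - α‖₂ ≤ ((‖Δ̃ᵀΔ̃ - ΔᵀΔ‖ + λ)/λ)·‖α‖₂, where matrix norms are operator norms. -/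
open Matrix
open scoped Matrix.Norms.L2Operator

/-!
Both coefficient vectors lie on the hyperplane `∑ i, x i = 1`, and each is sent by its own
matrix to a multiple of `1`. Hence their difference `d` is orthogonal to `1`, and
`d ⬝ᵥ A *ᵥ d = -(d ⬝ᵥ (A - B) *ᵥ α)`. Since `A ≥ λ • 1`, this gives
`λ ‖d‖² ≤ ‖d‖ ‖A - B‖ ‖α‖`, and `‖A - B‖ ≤ ‖Δ̃ᵀΔ̃ - ΔᵀΔ‖ + λ` by the triangle inequality.
-/

namespace Matrix

variable {m n : Type*} [Fintype m] [Fintype n]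

lemma sqrt_sum_sq_eq_norm_toLp (v : n → ℝ) : √(∑ i, v i ^ 2) = ‖WithLp.toLp 2 v‖ := by
  simp only [EuclideanSpace.norm_eq, Real.norm_eq_abs, sq_abs]

lemma dotProduct_eq_inner_toLp (u v : n → ℝ) :
    u ⬝ᵥ v = inner ℝ (WithLp.toLp 2 u) (WithLp.toLp 2 v) := by
  rw [EuclideanSpace.inner_eq_star_dotProduct, star_trivial, dotProduct_comm]

lemma dotProduct_self_eq_norm_toLp_sq (v : n → ℝ) : v ⬝ᵥ v = ‖WithLp.toLp 2 v‖ ^ 2 := by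
  rw [dotProduct_eq_inner_toLp, real_inner_self_eq_norm_sq]

variable [DecidableEq n]

lemma abs_dotProduct_mulVec_le (M : Matrix m n ℝ) (u : m → ℝ) (v : n → ℝ) :
    |u ⬝ᵥ M *ᵥ v| ≤ ‖WithLp.toLp 2 u‖ * (‖M‖ * ‖WithLp.toLp 2 v‖) := by
  rw [dotProduct_eq_inner_toLp]
  exact (abs_real_inner_le_norm _ _).trans
    (mul_le_mul_of_nonneg_left (M.l2_opNorm_mulVec (WithLp.toLp 2 v)) (norm_nonneg _))

lemma norm_smul_one_le (c : ℝ) : ‖c • (1 : Matrix n n ℝ)‖ ≤ |c| := by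
  rw [smul_one_eq_diagonal, l2_opNorm_diagonal, ← Real.norm_eq_abs]
  exact pi_norm_const_le c

/-- For positive definite `M`, the minimiser of `x ⬝ᵥ M *ᵥ x` subject to `∑ i, x i = 1`
(the Anderson acceleration coefficients). -/
noncomputable def andersonWeights (M : Matrix n n ℝ) : n → ℝ :=
  (1 / ((1 : n → ℝ) ⬝ᵥ M⁻¹ *ᵥ 1)) • M⁻¹ *ᵥ 1

lemma mulVec_andersonWeights {M : Matrix n n ℝ} (hM : IsUnit M) :
    M *ᵥ M.andersonWeights = (1 / ((1 : n → ℝ) ⬝ᵥ M⁻¹ *ᵥ 1)) • 1 := by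
  rw [andersonWeights, mulVec_smul, mulVec_mulVec,
    mul_nonsing_inv _ ((isUnit_iff_isUnit_det M).mp hM), one_mulVec]

lemma PosDef.one_dotProduct_andersonWeights [Nonempty n] {M : Matrix n n ℝ} (hM : M.PosDef) :
    1 ⬝ᵥ M.andersonWeights = 1 := by
  have hpos : 0 < (1 : n → ℝ) ⬝ᵥ M⁻¹ *ᵥ 1 := by
    simpa using hM.inv.dotProduct_mulVec_pos (one_ne_zero (α := n → ℝ))
  rw [andersonWeights, dotProduct_smul, smul_eq_mul, one_div_mul_cancel hpos.ne']

lemma PosDef.dotProduct_mulVec_andersonWeights_sub [Nonempty n] {A B : Matrix n n ℝ}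
    (hA : A.PosDef) (hB : B.PosDef) :
    let d := A.andersonWeights - B.andersonWeights
    d ⬝ᵥ A *ᵥ d = -(d ⬝ᵥ (A - B) *ᵥ B.andersonWeights) := by
  intro d
  have hd : d ⬝ᵥ 1 = 0 := by
    rw [sub_dotProduct, dotProduct_comm, hA.one_dotProduct_andersonWeights, dotProduct_comm,
      hB.one_dotProduct_andersonWeights, sub_self]
  have hA0 : d ⬝ᵥ A *ᵥ A.andersonWeights = 0 := by
    rw [mulVec_andersonWeights hA.isUnit, dotProduct_smul, hd, smul_zero]
  have hB0 : d ⬝ᵥ B *ᵥ B.andersonWeights = 0 := by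
    rw [mulVec_andersonWeights hB.isUnit, dotProduct_smul, hd, smul_zero]
  rw [mulVec_sub, dotProduct_sub, hA0, sub_mulVec, dotProduct_sub, hB0, zero_sub, sub_zero]

lemma PosSemidef.mul_dotProduct_self_le_add_smul_one {C : Matrix n n ℝ} (hC : C.PosSemidef)
    (c : ℝ) (v : n → ℝ) : c * (v ⬝ᵥ v) ≤ v ⬝ᵥ (C + c • 1) *ᵥ v := by
  have hCv := hC.dotProduct_mulVec_nonneg v
  rw [star_trivial] at hCv
  rw [add_mulVec, dotProduct_add, smul_mulVec, one_mulVec, dotProduct_smul, smul_eq_mul]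
  linarith

lemma PosSemidef.mul_norm_andersonWeights_sub_le [Nonempty n] {C B : Matrix n n ℝ}
    (hC : C.PosSemidef) (hB : B.PosDef) {c : ℝ} (hc : 0 < c) :
    c * ‖WithLp.toLp 2 ((C + c • 1).andersonWeights - B.andersonWeights)‖ ≤
      ‖C + c • 1 - B‖ * ‖WithLp.toLp 2 B.andersonWeights‖ := by
  set A := C + c • 1
  have hA : A.PosDef := PosDef.posSemidef_add hC (PosDef.one.smul hc)
  set d := A.andersonWeights - B.andersonWeights
  set δ := ‖WithLp.toLp 2 d‖
  have hδ : δ * (c * δ) ≤ δ * (‖A - B‖ * ‖WithLp.toLp 2 B.andersonWeights‖) :=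
    calc δ * (c * δ) = c * (d ⬝ᵥ d) := by rw [dotProduct_self_eq_norm_toLp_sq]; ring
      _ ≤ d ⬝ᵥ A *ᵥ d := hC.mul_dotProduct_self_le_add_smul_one c d
      _ = -(d ⬝ᵥ (A - B) *ᵥ B.andersonWeights) := hA.dotProduct_mulVec_andersonWeights_sub hB
      _ ≤ |d ⬝ᵥ (A - B) *ᵥ B.andersonWeights| := neg_le_abs _
      _ ≤ δ * (‖A - B‖ * ‖WithLp.toLp 2 B.andersonWeights‖) := abs_dotProduct_mulVec_le _ _ _
  rcases (norm_nonneg (WithLp.toLp 2 d)).eq_or_lt with h0 | hpos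
  · rw [show δ = 0 from h0.symm, mul_zero]
    positivity
  · exact le_of_mul_le_mul_left hδ hpos

end Matrix

/-- Second bound of Proposition 1 (perturbation bound): with `A = Δ̃ᵀΔ̃ + λI`, `B = ΔᵀΔ`,
`α = B⁻¹𝟏/(𝟏ᵀB⁻¹𝟏)` and `α̃ = A⁻¹𝟏/(𝟏ᵀA⁻¹𝟏)`, one has
`‖α̃ - α‖ ≤ ((‖Δ̃ᵀΔ̃ - ΔᵀΔ‖ + λ)/λ)·‖α‖`. -/
theorem raa_coefficient_perturbation_bound
    {N m : ℕ} (Δ Δt : Matrix (Fin N) (Fin m) ℝ) (hinv : Invertible (Δᵀ * Δ))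
    (lam : ℝ) (hlam : 0 < lam)
    (A B : Matrix (Fin m) (Fin m) ℝ)
    (hA : A = Δtᵀ * Δt + lam • (1 : Matrix (Fin m) (Fin m) ℝ))
    (hB : B = Δᵀ * Δ)
    (α αt : Fin m → ℝ)
    (hα : α = (1 / ((1 : Fin m → ℝ) ⬝ᵥ B⁻¹.mulVec 1)) • B⁻¹.mulVec 1)
    (hαt : αt = (1 / ((1 : Fin m → ℝ) ⬝ᵥ A⁻¹.mulVec 1)) • A⁻¹.mulVec 1) :
    Real.sqrt (∑ i, (αt i - α i) ^ 2) ≤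
      ((‖Δtᵀ * Δt - Δᵀ * Δ‖ + lam) / lam) * Real.sqrt (∑ i, α i ^ 2) := by
  obtain _ | _ := isEmpty_or_nonempty (Fin m)
  · simp only [Finset.univ_eq_empty, Finset.sum_empty, Real.sqrt_zero, mul_zero, le_refl]
  have hGram (M : Matrix (Fin N) (Fin m) ℝ) : (Mᵀ * M).PosSemidef :=
    conjTranspose_eq_transpose_of_trivial M ▸ posSemidef_conjTranspose_mul_self M
  have hBpd : B.PosDef := hB ▸ (hGram Δ).posDef_iff_isUnit.mpr (isUnit_of_invertible _)
  have hperturb : ‖A - B‖ ≤ ‖Δtᵀ * Δt - Δᵀ * Δ‖ + lam := by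
    rw [hA, hB, add_sub_right_comm]
    refine (norm_add_le _ _).trans ?_
    gcongr
    exact (norm_smul_one_le lam).trans_eq (abs_of_pos hlam)
  have key := (hGram Δt).mul_norm_andersonWeights_sub_le hBpd hlam
  rw [← hA] at key
  have hd := sqrt_sum_sq_eq_norm_toLp (αt - α)
  simp only [Pi.sub_apply] at hd
  rw [hd, sqrt_sum_sq_eq_norm_toLp, hα, hαt, div_mul_eq_mul_div, le_div_iff₀ hlam, mul_comm]
  exact key.trans (mul_le_mul_of_nonneg_right hperturb (norm_nonneg _))
end

section
/- Let A and B be symmetric m×m real matrices with A invertible and B invertible, 𝟏 the all-ones vector, and suppose α = B⁻¹𝟏/(𝟏ᵀB⁻¹𝟏) and α̃ = A⁻¹𝟏/(𝟏ᵀA⁻¹𝟏) are well defined (denominators nonzero). Then α̃ - α = -(I - A⁻¹𝟏𝟏ᵀ/(𝟏ᵀA⁻¹𝟏))·A⁻¹·(A - B)·α. -/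
open Matrix

lemma vecMulVec_mulVec' {m : ℕ} (u w v : Fin m → ℝ) :
    (vecMulVec u w).mulVec v = (w ⬝ᵥ v) • u := by
  ext i
  simp only [vecMulVec, mulVec, dotProduct, Pi.smul_apply, smul_eq_mul, Finset.sum_mul,
    Finset.mul_sum, Matrix.of_apply]
  exact Finset.sum_congr rfl fun x _ => by ring

/-- Exact algebraic identity from the proof of Proposition 1:
`α̃ - α = -(I - A⁻¹𝟏𝟏ᵀ/(𝟏ᵀA⁻¹𝟏))·A⁻¹·(A - B)·α`. -/
theorem raa_coefficient_difference_identity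
    {m : ℕ} (A B : Matrix (Fin m) (Fin m) ℝ)
    (hAsymm : Aᵀ = A) (hBsymm : Bᵀ = B)
    (hAinv : Invertible A) (hBinv : Invertible B)
    (hAden : (1 : Fin m → ℝ) ⬝ᵥ A⁻¹.mulVec 1 ≠ 0)
    (hBden : (1 : Fin m → ℝ) ⬝ᵥ B⁻¹.mulVec 1 ≠ 0)
    (α αt : Fin m → ℝ)
    (hα : α = (1 / ((1 : Fin m → ℝ) ⬝ᵥ B⁻¹.mulVec 1)) • B⁻¹.mulVec 1)
    (hαt : αt = (1 / ((1 : Fin m → ℝ) ⬝ᵥ A⁻¹.mulVec 1)) • A⁻¹.mulVec 1) :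
    αt - α =
      -((1 - (1 / ((1 : Fin m → ℝ) ⬝ᵥ A⁻¹.mulVec 1)) •
            (A⁻¹ * vecMulVec (1 : Fin m → ℝ) (1 : Fin m → ℝ))).mulVec
          (A⁻¹.mulVec ((A - B).mulVec α))) := by
  set a : Fin m → ℝ := A⁻¹.mulVec 1 with ha
  set b : Fin m → ℝ := B⁻¹.mulVec 1 with hb
  set s : ℝ := (1 : Fin m → ℝ) ⬝ᵥ a with hs
  set t : ℝ := (1 : Fin m → ℝ) ⬝ᵥ b with ht
  have hBα : B.mulVec α = (1 / t) • (1 : Fin m → ℝ) := by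
    rw [hα, mulVec_smul, hb, mulVec_mulVec, mul_nonsing_inv _ B.isUnit_det_of_invertible, one_mulVec]
  have hAinvA : ∀ v : Fin m → ℝ, A⁻¹.mulVec (A.mulVec v) = v := by
    intro v
    rw [mulVec_mulVec, nonsing_inv_mul _ A.isUnit_det_of_invertible, one_mulVec]
  have hkey : A⁻¹.mulVec ((A - B).mulVec α) = α - (1 / t) • a := by
    rw [sub_mulVec, mulVec_sub, hAinvA, hBα, mulVec_smul, ← ha]
  have hdotα : (1 : Fin m → ℝ) ⬝ᵥ α = 1 := by
    rw [hα, dotProduct_smul, ← ht, smul_eq_mul]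
    field_simp
  rw [hkey, sub_mulVec, one_mulVec, smul_mulVec, ← mulVec_mulVec,
    vecMulVec_mulVec', dotProduct_sub, hdotα, dotProduct_smul, ← hs, mulVec_smul,
    sub_smul, smul_sub, smul_smul, smul_smul, hαt, hα]
  have hs0 : s ≠ 0 := hAden
  have ht0 : t ≠ 0 := hBden
  ext i
  simp only [Pi.sub_apply, Pi.smul_apply, Pi.neg_apply, smul_eq_mul, one_smul]
  field_simp
  simp only [one_div, ← ha]
  ring
end

section
/- Let Δ̃ be a real N×m matrix and λ > 0. As λ → ∞, the regularized Anderson coefficient vector α̃(λ) = (Δ̃ᵀΔ̃ + λI)⁻¹𝟏 / (𝟏ᵀ(Δ̃ᵀΔ̃ + λI)⁻¹𝟏) converges to the uniform vector (1/m)𝟏; quantitatively, ‖α̃(λ) - (1/m)𝟏‖ ≤ C·‖Δ̃‖²/λ for some constant C depending only on m once λ ≥ ‖Δ̃‖². -/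
/-!
Put `v = λ (ΔᵀΔ + λI)⁻¹ 𝟏`, so that `α̃(λ) = v / ⟪𝟏, v⟫`. Positivity of `ΔᵀΔ` gives
`‖v‖² ≤ ⟪𝟏, v⟫ ≤ ‖𝟏‖ ‖v‖`, hence `‖v‖ ≤ ‖𝟏‖` and `‖v - 𝟏‖ = ‖ΔᵀΔ v‖ / λ ≤ ‖Δ‖² ‖𝟏‖ / λ`.
Conversely `λ ‖𝟏‖ ≤ (‖Δ‖² + λ) ‖v‖`, so `⟪𝟏, v⟫ ≥ ‖v‖² ≥ ‖𝟏‖² / 4` once `λ ≥ ‖Δ‖²`.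
Since `‖v / ⟪e, v⟫ - e / ‖e‖²‖ ≤ 2 ‖v - e‖ / ⟪e, v⟫` for any `e, v` with `⟪e, v⟫ > 0`,
this gives `‖α̃(λ) - 𝟏 / m‖ ≤ 8 ‖Δ‖² / (λ √m)`.
-/

open Matrix Filter
open scoped Matrix.Norms.L2Operator Topology RealInnerProductSpace
open WithLp

section

variable {E : Type*} [NormedAddCommGroup E] [InnerProductSpace ℝ E]

theorem norm_inv_inner_smul_sub_le {e v : E} (h : 0 < ⟪e, v⟫) :
    ‖⟪e, v⟫⁻¹ • v - (‖e‖ ^ 2)⁻¹ • e‖ ≤ 2 * ‖v - e‖ / ⟪e, v⟫ := by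
  have he : 0 < ‖e‖ := norm_pos_iff.mpr (by rintro rfl; simp at h)
  have hsplit : ⟪e, v⟫⁻¹ • v - (‖e‖ ^ 2)⁻¹ • e
      = ⟪e, v⟫⁻¹ • (v - e) + (⟪e, e - v⟫ / (⟪e, v⟫ * ‖e‖ ^ 2)) • e := by
    rw [inner_sub_right, real_inner_self_eq_norm_sq, smul_sub, sub_add, ← sub_smul]
    congr 2
    field_simp
    ring
  have hdefect : |⟪e, e - v⟫| ≤ ‖e‖ * ‖v - e‖ := by
    rw [← norm_neg (v - e), neg_sub]; exact abs_real_inner_le_norm e (e - v)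
  calc ‖⟪e, v⟫⁻¹ • v - (‖e‖ ^ 2)⁻¹ • e‖
      ≤ ⟪e, v⟫⁻¹ * ‖v - e‖ + |⟪e, e - v⟫| / (⟪e, v⟫ * ‖e‖ ^ 2) * ‖e‖ := by
        rw [hsplit]
        refine (norm_add_le _ _).trans_eq ?_
        rw [norm_smul, norm_smul, Real.norm_of_nonneg (inv_nonneg.mpr h.le), Real.norm_eq_abs,
          abs_div, abs_of_pos (by positivity : 0 < ⟪e, v⟫ * ‖e‖ ^ 2)]
    _ ≤ ⟪e, v⟫⁻¹ * ‖v - e‖ + ‖e‖ * ‖v - e‖ / (⟪e, v⟫ * ‖e‖ ^ 2) * ‖e‖ := by gcongr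
    _ = 2 * ‖v - e‖ / ⟪e, v⟫ := by field_simp; ring

variable {T : E →L[ℝ] E} {lam : ℝ} {e v : E}

theorem norm_sq_le_inner_of_add_smul_eq (hT : ∀ x, 0 ≤ ⟪T x, x⟫) (hlam : 0 < lam)
    (hv : T v + lam • v = lam • e) : ‖v‖ ^ 2 ≤ ⟪e, v⟫ := by
  have h : lam * ⟪e, v⟫ = ⟪T v, v⟫ + lam * ‖v‖ ^ 2 := by
    rw [← real_inner_smul_left, ← hv, inner_add_left, real_inner_smul_left,
      real_inner_self_eq_norm_sq]
  nlinarith [hT v]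

theorem norm_le_of_add_smul_eq (hT : ∀ x, 0 ≤ ⟪T x, x⟫) (hlam : 0 < lam)
    (hv : T v + lam • v = lam • e) : ‖v‖ ≤ ‖e‖ := by
  have h := (norm_sq_le_inner_of_add_smul_eq hT hlam hv).trans (real_inner_le_norm e v)
  rcases (norm_nonneg v).eq_or_lt with h0 | h0
  · rw [← h0]; exact norm_nonneg e
  · nlinarith

theorem mul_norm_sub_le_of_add_smul_eq (hT : ∀ x, 0 ≤ ⟪T x, x⟫) (hlam : 0 < lam)
    (hv : T v + lam • v = lam • e) : lam * ‖v - e‖ ≤ ‖T‖ * ‖e‖ := by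
  have h : lam • (v - e) = -T v := by rw [smul_sub, ← hv]; abel
  calc lam * ‖v - e‖ = ‖T v‖ := by
        rw [← norm_neg (T v), ← h, norm_smul, Real.norm_of_nonneg hlam.le]
    _ ≤ ‖T‖ * ‖v‖ := T.le_opNorm v
    _ ≤ ‖T‖ * ‖e‖ := by gcongr; exact norm_le_of_add_smul_eq hT hlam hv

theorem mul_norm_le_of_add_smul_eq (hlam : 0 < lam) (hv : T v + lam • v = lam • e) :
    lam * ‖e‖ ≤ (‖T‖ + lam) * ‖v‖ :=
  calc lam * ‖e‖ = ‖T v + lam • v‖ := by rw [hv, norm_smul, Real.norm_of_nonneg hlam.le]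
    _ ≤ ‖T v‖ + ‖lam • v‖ := norm_add_le _ _
    _ ≤ ‖T‖ * ‖v‖ + lam * ‖v‖ := by
        rw [norm_smul, Real.norm_of_nonneg hlam.le]; gcongr; exact T.le_opNorm v
    _ = (‖T‖ + lam) * ‖v‖ := by ring

theorem norm_inv_inner_smul_sub_le_of_add_smul_eq (hT : ∀ x, 0 ≤ ⟪T x, x⟫) (hlam : 0 < lam)
    (hTlam : ‖T‖ ≤ lam) (he : e ≠ 0) (hv : T v + lam • v = lam • e) :
    ‖⟪e, v⟫⁻¹ • v - (‖e‖ ^ 2)⁻¹ • e‖ ≤ 8 * ‖T‖ / (lam * ‖e‖) := by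
  have he' : 0 < ‖e‖ := norm_pos_iff.mpr he
  have hv' : ‖e‖ / 2 ≤ ‖v‖ := by
    have := mul_norm_le_of_add_smul_eq hlam hv
    rw [div_le_iff₀ two_pos]
    nlinarith [norm_nonneg v]
  have hinner : ‖e‖ ^ 2 / 4 ≤ ⟪e, v⟫ :=
    calc ‖e‖ ^ 2 / 4 = (‖e‖ / 2) ^ 2 := by ring
      _ ≤ ‖v‖ ^ 2 := by gcongr
      _ ≤ ⟪e, v⟫ := norm_sq_le_inner_of_add_smul_eq hT hlam hv
  have hpos : 0 < ⟪e, v⟫ := lt_of_lt_of_le (by positivity) hinner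
  have hsub : ‖v - e‖ ≤ ‖T‖ * ‖e‖ / lam := by
    rw [le_div_iff₀ hlam, mul_comm]; exact mul_norm_sub_le_of_add_smul_eq hT hlam hv
  calc ‖⟪e, v⟫⁻¹ • v - (‖e‖ ^ 2)⁻¹ • e‖ ≤ 2 * ‖v - e‖ / ⟪e, v⟫ := norm_inv_inner_smul_sub_le hpos
    _ ≤ 2 * (‖T‖ * ‖e‖ / lam) / (‖e‖ ^ 2 / 4) := by gcongr
    _ = 8 * ‖T‖ / (lam * ‖e‖) := by field_simp; ring

end

section

variable {ι κ : Type*} [Fintype ι] [DecidableEq ι] [Fintype κ]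

noncomputable def andersonCoeffs (Δ : Matrix κ ι ℝ) (lam : ℝ) : ι → ℝ :=
  (1 / ((1 : ι → ℝ) ⬝ᵥ (Δᵀ * Δ + lam • (1 : Matrix ι ι ℝ))⁻¹.mulVec 1)) •
    (Δᵀ * Δ + lam • (1 : Matrix ι ι ℝ))⁻¹.mulVec 1

theorem norm_toEuclideanCLM_transpose_mul_self (Δ : Matrix κ ι ℝ) :
    ‖toEuclideanCLM (𝕜 := ℝ) (Δᵀ * Δ)‖ = ‖Δ‖ ^ 2 := by
  rw [l2_opNorm_toEuclideanCLM, ← conjTranspose_eq_transpose_of_trivial,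
    l2_opNorm_conjTranspose_mul_self, sq]

theorem inner_toEuclideanCLM_transpose_mul_self_nonneg (Δ : Matrix κ ι ℝ)
    (x : EuclideanSpace ℝ ι) : 0 ≤ ⟪toEuclideanCLM (𝕜 := ℝ) (Δᵀ * Δ) x, x⟫ := by
  rw [real_inner_comm, inner_toEuclideanCLM, ← conjTranspose_eq_transpose_of_trivial]
  simpa using (posSemidef_conjTranspose_mul_self Δ).dotProduct_mulVec_nonneg (ofLp x)

theorem toEuclideanCLM_add_smul_apply_inv_mulVec {A : Matrix ι ι ℝ} {lam : ℝ}
    (hA : IsUnit (A + lam • (1 : Matrix ι ι ℝ)).det) (x : ι → ℝ) :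
    toEuclideanCLM (𝕜 := ℝ) A (toLp 2 ((A + lam • 1)⁻¹ *ᵥ x)) +
      lam • toLp 2 ((A + lam • 1)⁻¹ *ᵥ x) = toLp 2 x := by
  rw [toEuclideanCLM_toLp, ← WithLp.toLp_smul, ← WithLp.toLp_add]
  conv_rhs => rw [← one_mulVec x, ← mul_nonsing_inv _ hA, ← mulVec_mulVec, add_mulVec,
    smul_mulVec, one_mulVec]

theorem dist_andersonCoeffs_le [Nonempty ι] (Δ : Matrix κ ι ℝ) {lam : ℝ} (hlam : 0 < lam)
    (hΔ : ‖Δ‖ ^ 2 ≤ lam) :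
    dist (toLp 2 (andersonCoeffs Δ lam)) (toLp 2 fun _ => 1 / (Fintype.card ι : ℝ)) ≤
      8 / √(Fintype.card ι) * ‖Δ‖ ^ 2 / lam := by
  set B := Δᵀ * Δ + lam • (1 : Matrix ι ι ℝ)
  set T := toEuclideanCLM (𝕜 := ℝ) (Δᵀ * Δ)
  set e : EuclideanSpace ℝ ι := toLp 2 1
  set v : EuclideanSpace ℝ ι := lam • toLp 2 (B⁻¹ *ᵥ 1)
  have hB : IsUnit B.det := by
    have hpd : B.PosDef := by
      refine PosDef.posSemidef_add ?_ (PosDef.one.smul hlam)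
      simpa [conjTranspose_eq_transpose_of_trivial] using posSemidef_conjTranspose_mul_self Δ
    exact (isUnit_iff_isUnit_det _).mp hpd.isUnit
  have hv : T v + lam • v = lam • e := by
    rw [map_smul, smul_comm, ← smul_add, toEuclideanCLM_add_smul_apply_inv_mulVec hB]
  have hnorm_e : ‖e‖ = √(Fintype.card ι) := by
    simp [e, EuclideanSpace.norm_eq]
  have he : e ≠ 0 := by
    rw [← norm_pos_iff, hnorm_e]; exact Real.sqrt_pos.mpr (by exact_mod_cast Fintype.card_pos)
  have hcoeffs : toLp 2 (andersonCoeffs Δ lam) = ⟪e, v⟫⁻¹ • v := by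
    have hinner : ⟪e, v⟫ = lam * ((1 : ι → ℝ) ⬝ᵥ B⁻¹ *ᵥ 1) := by
      rw [real_inner_smul_right, EuclideanSpace.inner_toLp_toLp, star_trivial, dotProduct_comm]
    rw [andersonCoeffs, WithLp.toLp_smul, hinner, smul_smul, _root_.mul_inv_rev, mul_assoc,
      inv_mul_cancel₀ hlam.ne', mul_one, one_div]
  have huniform : (toLp 2 fun _ => 1 / (Fintype.card ι : ℝ)) = (‖e‖ ^ 2)⁻¹ • e := by
    rw [hnorm_e, Real.sq_sqrt (Nat.cast_nonneg _), ← WithLp.toLp_smul]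
    congr 1
    ext
    simp
  rw [dist_eq_norm, hcoeffs, huniform]
  have := norm_inv_inner_smul_sub_le_of_add_smul_eq
    (inner_toEuclideanCLM_transpose_mul_self_nonneg Δ) hlam
    ((norm_toEuclideanCLM_transpose_mul_self Δ).trans_le hΔ) he hv
  rw [norm_toEuclideanCLM_transpose_mul_self] at this
  refine this.trans_eq ?_
  rw [hnorm_e]
  field_simp

end

/-- As `λ → ∞`, the regularized Anderson coefficient vector
`α̃(λ) = (Δ̃ᵀΔ̃ + λI)⁻¹𝟏 / (𝟏ᵀ(Δ̃ᵀΔ̃ + λI)⁻¹𝟏)` tends to the uniform vector `(1/m)𝟏`;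
quantitatively, `‖α̃(λ) - (1/m)𝟏‖ ≤ C·‖Δ̃‖²/λ` for a constant `C` depending only on `m`,
once `λ ≥ ‖Δ̃‖²`. -/
theorem raa_coefficients_tendsto_uniform
    {m : ℕ} (hm : 0 < m) :
    (∀ (N : ℕ) (Δ : Matrix (Fin N) (Fin m) ℝ),
      Tendsto
        (fun lam : ℝ =>
          (1 / ((1 : Fin m → ℝ) ⬝ᵥ
              (Δᵀ * Δ + lam • (1 : Matrix (Fin m) (Fin m) ℝ))⁻¹.mulVec 1)) •
            (Δᵀ * Δ + lam • (1 : Matrix (Fin m) (Fin m) ℝ))⁻¹.mulVec 1)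
        atTop (𝓝 fun _ => (1 : ℝ) / m)) ∧
    ∃ C : ℝ, 0 < C ∧
      ∀ (N : ℕ) (Δ : Matrix (Fin N) (Fin m) ℝ) (lam : ℝ),
        ‖Δ‖ ^ 2 ≤ lam → 0 < lam →
        Real.sqrt (∑ i,
            (((1 / ((1 : Fin m → ℝ) ⬝ᵥ
                (Δᵀ * Δ + lam • (1 : Matrix (Fin m) (Fin m) ℝ))⁻¹.mulVec 1)) •
              (Δᵀ * Δ + lam • (1 : Matrix (Fin m) (Fin m) ℝ))⁻¹.mulVec 1) i
              - 1 / m) ^ 2) ≤ C * ‖Δ‖ ^ 2 / lam := by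
  have : Nonempty (Fin m) := ⟨⟨0, hm⟩⟩
  have hdist : ∀ N (Δ : Matrix (Fin N) (Fin m) ℝ) lam, 0 < lam → ‖Δ‖ ^ 2 ≤ lam →
      dist (toLp 2 (andersonCoeffs Δ lam)) (toLp 2 fun _ => (1 : ℝ) / m) ≤
        8 / √m * ‖Δ‖ ^ 2 / lam :=
    fun N Δ lam hlam hΔ => by simpa using dist_andersonCoeffs_le Δ hlam hΔ
  refine ⟨fun N Δ => ?_, 8 / √m, by positivity, fun N Δ lam hΔ hlam => ?_⟩
  · have hLp : Tendsto (fun lam => toLp 2 (andersonCoeffs Δ lam)) atTop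
        (𝓝 (toLp 2 fun _ => (1 : ℝ) / m)) := by
      refine tendsto_iff_dist_tendsto_zero.mpr <| squeeze_zero' ?_ ?_
        ((tendsto_const_nhds (x := 8 / √m * ‖Δ‖ ^ 2)).div_atTop tendsto_id)
      · exact Eventually.of_forall fun _ => dist_nonneg
      · filter_upwards [eventually_gt_atTop 0, eventually_ge_atTop (‖Δ‖ ^ 2)] with lam hlam hΔ
        exact hdist N Δ lam hlam hΔ
    exact ((PiLp.continuous_ofLp 2 _).tendsto _).comp hLp
  · simpa [andersonCoeffs, EuclideanSpace.dist_eq, Real.dist_eq, sq_abs] using hdist N Δ lam hlam hΔ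
end
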